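/- arXiv:1102.0593 — 5 statements merged into one kernel-verified Lean document; each statement's English description precedes it below -/
import Mathlib

section
/- Let ξ ∈ ℝ² with ξ ≠ 0, and let L be a line in ℝ² with induced arclength measure dS. If 0 < a < 1, 0 < b < 1, and a + b > 1, then ∫_L dS(η)/(|ξ − η|^a · |η|^b) ≤ C/|ξ|^{a+b−1} for a constant C depending only on a, b and independent of L and ξ. -/
open MeasureTheory
open scoped ENNReal

/-!
Parametrise `L` by arclength as `t ↦ t • u + p`. Then `‖η‖` and `‖ξ - η‖` are at least the
distances `|t - t₀|`, `|t - t_ξ|` to the feet of the perpendiculars from `0` and `ξ`, while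
`‖ξ - η‖ + ‖η‖ ≥ ‖ξ‖` makes the larger of `‖ξ - η‖`, `‖η‖` at least `‖ξ‖ / 2`. So the integrand is
dominated by two one-dimensional kernels, `(‖ξ‖/2)^(-a) s^(-b)` for `s ≤ ‖ξ‖/2` and
`s^(-(a+b))` beyond, whose integrals are multiples of `‖ξ‖^(1-a-b)` because `b < 1 < a + b`.
-/

open Set Real
open scoped RealInnerProductSpace

theorem setLIntegral_Ioc_zero_ofReal_rpow {r c : ℝ} (hr : -1 < r) (hc : 0 ≤ c) :
    ∫⁻ t in Ioc 0 c, ENNReal.ofReal (t ^ r) = ENNReal.ofReal (c ^ (r + 1) / (r + 1)) := by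
  have hint : IntegrableOn (fun t : ℝ => t ^ r) (Ioc 0 c) := by
    simpa [intervalIntegrable_iff, uIoc_of_le hc] using
      intervalIntegral.intervalIntegrable_rpow' (a := 0) (b := c) hr
  rw [← ofReal_integral_eq_lintegral_ofReal hint
    ((ae_restrict_mem measurableSet_Ioc).mono fun t ht => rpow_nonneg ht.1.le r),
    ← intervalIntegral.integral_of_le hc, integral_rpow (Or.inl hr),
    zero_rpow (by linarith : r + 1 ≠ 0), sub_zero]

theorem setLIntegral_Ioi_ofReal_rpow {r c : ℝ} (hr : r < -1) (hc : 0 < c) :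
    ∫⁻ t in Ioi c, ENNReal.ofReal (t ^ r) = ENNReal.ofReal (-c ^ (r + 1) / (r + 1)) := by
  rw [← ofReal_integral_eq_lintegral_ofReal (integrableOn_Ioi_rpow_of_lt hr hc)
    ((ae_restrict_mem measurableSet_Ioi).mono fun t ht => rpow_nonneg (hc.trans ht).le r),
    integral_Ioi_rpow_of_lt hr hc]

theorem lintegral_comp_abs (f : ℝ → ℝ≥0∞) : ∫⁻ x, f |x| = 2 * ∫⁻ x in Ioi 0, f x := by
  have hIci : ∫⁻ x in Ici 0, f |x| = ∫⁻ x in Ioi 0, f x := by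
    rw [← restrict_Ioi_eq_restrict_Ici]
    exact setLIntegral_congr_fun measurableSet_Ioi fun x hx => by rw [abs_of_pos hx]
  have hIio : ∫⁻ x in Iio 0, f |x| = ∫⁻ x in Ioi 0, f x := by
    rw [← lintegral_indicator measurableSet_Iio, ← lintegral_indicator measurableSet_Ioi,
      ← lintegral_neg_eq_self]
    congr 1 with x
    by_cases hx : 0 < x <;> simp [indicator, hx, abs_of_pos]
  rw [← lintegral_add_compl _ measurableSet_Iio, compl_Iio, hIio, hIci, two_mul]

/-- A majorant of `x ^ (-a) * y ^ (-b)` at `s ≤ y ≤ x` with `c ≤ x`. -/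
noncomputable def truncatedKernel (a b c s : ℝ) : ℝ :=
  if s ≤ c then c ^ (-a) * s ^ (-b) else s ^ (-(a + b))

namespace truncatedKernel

variable {a b c s : ℝ}

theorem nonneg (hs : 0 ≤ s) : 0 ≤ truncatedKernel a b c s := by
  unfold truncatedKernel
  split_ifs with h
  · exact mul_nonneg (rpow_nonneg (hs.trans h) _) (rpow_nonneg hs _)
  · exact rpow_nonneg hs _

@[fun_prop]
theorem measurable (a b c : ℝ) : Measurable (truncatedKernel a b c) :=
  Measurable.ite measurableSet_Iic (by fun_prop) (by fun_prop)

theorem one_div_rpow_mul_rpow_le {x y : ℝ} (ha : 0 ≤ a) (hb : 0 ≤ b) (hs : 0 < s)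
    (hsy : s ≤ y) (hyx : y ≤ x) (hcx : c ≤ x) :
    1 / (x ^ a * y ^ b) ≤ truncatedKernel a b c s := by
  unfold truncatedKernel
  split_ifs with hsc
  · rw [rpow_neg (hs.le.trans hsc), rpow_neg hs.le, ← mul_inv, ← one_div]
    have hc : 0 < c := hs.trans_le hsc
    have hx : 0 < x := hc.trans_le hcx
    gcongr
  · have hx : 0 < x := hs.trans_le (hsy.trans hyx)
    rw [rpow_neg hs.le, rpow_add hs, ← one_div]
    gcongr
    exact hsy.trans hyx

theorem one_div_rpow_mul_rpow_le_add {x y s₁ s₂ : ℝ} (ha : 0 ≤ a) (hb : 0 ≤ b)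
    (hs₁ : 0 < s₁) (hs₂ : 0 < s₂) (h₁ : s₁ ≤ x) (h₂ : s₂ ≤ y) (hxy : 2 * c ≤ x + y) :
    1 / (x ^ a * y ^ b) ≤ truncatedKernel a b c s₂ + truncatedKernel b a c s₁ := by
  rcases le_total y x with hyx | hxy'
  · exact (one_div_rpow_mul_rpow_le ha hb hs₂ h₂ hyx (by linarith)).trans
      (le_add_of_nonneg_right (nonneg hs₁.le))
  · rw [mul_comm]
    exact (one_div_rpow_mul_rpow_le hb ha hs₁ h₁ hxy' (by linarith)).trans
      (le_add_of_nonneg_left (nonneg hs₂.le))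

theorem lintegral_abs_sub (hb : b < 1) (hab : 1 < a + b) (hc : 0 < c) (w : ℝ) :
    ∫⁻ t, ENNReal.ofReal (truncatedKernel a b c |t - w|)
      = ENNReal.ofReal (2 * c ^ (1 - (a + b)) * (1 / (1 - b) + 1 / (a + b - 1))) := by
  have hnear : ∫⁻ t in Ioc 0 c, ENNReal.ofReal (truncatedKernel a b c t)
      = ENNReal.ofReal (c ^ (1 - (a + b)) / (1 - b)) := by
    rw [setLIntegral_congr_fun measurableSet_Ioc fun t ht => by
        rw [truncatedKernel, if_pos ht.2, ENNReal.ofReal_mul (rpow_nonneg hc.le _)],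
      lintegral_const_mul _ (by fun_prop),
      setLIntegral_Ioc_zero_ofReal_rpow (by linarith) hc.le, ← ENNReal.ofReal_mul (by positivity),
      mul_div_assoc', ← rpow_add hc, show -a + (-b + 1) = 1 - (a + b) by ring,
      show -b + 1 = 1 - b by ring]
  have hfar : ∫⁻ t in Ioi c, ENNReal.ofReal (truncatedKernel a b c t)
      = ENNReal.ofReal (c ^ (1 - (a + b)) / (a + b - 1)) := by
    rw [setLIntegral_congr_fun measurableSet_Ioi fun t ht => by
        rw [truncatedKernel, if_neg (not_le.2 ht)],
      setLIntegral_Ioi_ofReal_rpow (by linarith) hc, neg_div, ← div_neg,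
      show -(a + b) + 1 = 1 - (a + b) by ring, show -(1 - (a + b)) = a + b - 1 by ring]
  rw [lintegral_sub_right_eq_self (fun t => ENNReal.ofReal (truncatedKernel a b c |t|)),
    lintegral_comp_abs fun s => ENNReal.ofReal (truncatedKernel a b c s),
    ← Ioc_union_Ioi_eq_Ioi hc.le,
    lintegral_union measurableSet_Ioi Ioc_disjoint_Ioi_same, hnear, hfar,
    ← ENNReal.ofReal_add (by positivity) (by positivity), ← ENNReal.ofReal_ofNat 2,
    ← ENNReal.ofReal_mul zero_le_two]
  congr 1
  ring

end truncatedKernel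

section Line

variable {E : Type*} [NormedAddCommGroup E]

theorem AffineSubspace.exists_norm_eq_one_range_smul_add [NormedSpace ℝ E]
    (L : AffineSubspace ℝ E) (hL : Module.finrank ℝ L.direction = 1) :
    ∃ p u : E, ‖u‖ = 1 ∧ (L : Set E) = range fun t : ℝ => t • u + p := by
  obtain ⟨p, hp⟩ : (L : Set E).Nonempty := by
    rw [AffineSubspace.nonempty_iff_ne_bot]
    rintro rfl
    rw [AffineSubspace.direction_bot] at hL
    simp at hL
  obtain ⟨⟨v, hvL⟩, hv0, hspan⟩ := finrank_eq_one_iff'.mp hL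
  have hv : v ≠ 0 := fun h => hv0 (Subtype.ext h)
  refine ⟨p, ‖v‖⁻¹ • v, norm_smul_inv_norm hv, ?_⟩
  ext η
  rw [SetLike.mem_coe, ← AffineSubspace.vsub_right_mem_direction_iff_mem hp, vsub_eq_sub,
    mem_range]
  constructor
  · intro h
    obtain ⟨c, hc⟩ := hspan ⟨η - p, h⟩
    refine ⟨c * ‖v‖, ?_⟩
    rw [smul_smul, mul_assoc, mul_inv_cancel₀ (norm_ne_zero_iff.mpr hv), mul_one,
      ← eq_sub_iff_add_eq]
    exact congrArg Subtype.val hc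
  · rintro ⟨t, rfl⟩
    rw [add_sub_cancel_right, smul_smul]
    exact L.direction.smul_mem _ hvL

theorem isometry_smul_add [NormedSpace ℝ E] {u : E} (hu : ‖u‖ = 1) (p : E) :
    Isometry fun t : ℝ => t • u + p :=
  Isometry.of_dist_eq fun s t => by
    rw [dist_add_right, dist_eq_norm, ← sub_smul, norm_smul, hu, mul_one, Real.dist_eq,
      Real.norm_eq_abs]

theorem Isometry.setLIntegral_range_hausdorffMeasure_one {X : Type*} [EMetricSpace X]
    [MeasurableSpace X] [BorelSpace X] {g : ℝ → X} (hg : Isometry g) (f : X → ℝ≥0∞) :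
    ∫⁻ x in range g, f x ∂μH[1] = ∫⁻ t, f (g t) := by
  rw [← hg.map_hausdorffMeasure (Or.inl zero_le_one), hausdorffMeasure_real,
    hg.isClosedEmbedding.measurableEmbedding.lintegral_map]

theorem abs_sub_inner_le_norm_smul_add_sub [InnerProductSpace ℝ E] {u : E} (hu : ‖u‖ = 1)
    (p q : E) (t : ℝ) : |t - ⟪q - p, u⟫| ≤ ‖t • u + p - q‖ := by
  have hinner : ⟪t • u + p - q, u⟫ = t - ⟪q - p, u⟫ := by
    rw [← sub_sub_eq_add_sub, inner_sub_left, real_inner_smul_left, real_inner_self_eq_norm_sq,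
      hu, one_pow, mul_one]
  simpa [hinner, hu] using abs_real_inner_le_norm (t • u + p - q) u

variable [InnerProductSpace ℝ E] {a b : ℝ} {u : E}

theorem one_div_rpow_mul_rpow_le_truncatedKernel_along_line (ha : 0 ≤ a) (hb : 0 ≤ b)
    (hu : ‖u‖ = 1) (p ξ : E) {t : ℝ} (h₀ : t ≠ ⟪0 - p, u⟫) (hξ : t ≠ ⟪ξ - p, u⟫) :
    1 / (‖ξ - (t • u + p)‖ ^ a * ‖t • u + p‖ ^ b)
      ≤ truncatedKernel a b (‖ξ‖ / 2) |t - ⟪0 - p, u⟫|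
        + truncatedKernel b a (‖ξ‖ / 2) |t - ⟪ξ - p, u⟫| := by
  refine truncatedKernel.one_div_rpow_mul_rpow_le_add ha hb
    (abs_sub_pos.2 hξ) (abs_sub_pos.2 h₀) ?_ ?_ ?_
  · rw [norm_sub_rev]
    exact abs_sub_inner_le_norm_smul_add_sub hu p ξ t
  · simpa using abs_sub_inner_le_norm_smul_add_sub hu p 0 t
  · rw [mul_div_cancel₀ _ two_ne_zero]
    exact norm_le_norm_sub_add ξ (t • u + p)

theorem lintegral_one_div_rpow_mul_rpow_on_line_le (ha1 : a < 1) (hb1 : b < 1)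
    (hab : 1 < a + b) (hu : ‖u‖ = 1) (p : E) {ξ : E} (hξ : ξ ≠ 0) :
    ∫⁻ t : ℝ, ENNReal.ofReal (1 / (‖ξ - (t • u + p)‖ ^ a * ‖t • u + p‖ ^ b))
      ≤ ENNReal.ofReal (2 ^ (a + b) * (1 / (1 - a) + 1 / (1 - b) + 2 / (a + b - 1))
          / ‖ξ‖ ^ (a + b - 1)) := by
  have hc : 0 < ‖ξ‖ / 2 := by positivity
  calc ∫⁻ t : ℝ, ENNReal.ofReal (1 / (‖ξ - (t • u + p)‖ ^ a * ‖t • u + p‖ ^ b))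
      ≤ ∫⁻ t : ℝ, (ENNReal.ofReal (truncatedKernel a b (‖ξ‖ / 2) |t - ⟪0 - p, u⟫|)
          + ENNReal.ofReal (truncatedKernel b a (‖ξ‖ / 2) |t - ⟪ξ - p, u⟫|)) := by
        refine lintegral_mono_ae ?_
        filter_upwards [volume.ae_ne ⟪0 - p, u⟫, volume.ae_ne ⟪ξ - p, u⟫] with t h₀ hξ'
        exact (ENNReal.ofReal_le_ofReal (one_div_rpow_mul_rpow_le_truncatedKernel_along_line
          (by linarith) (by linarith) hu p ξ h₀ hξ')).trans ENNReal.ofReal_add_le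
    _ = ENNReal.ofReal (2 * (‖ξ‖ / 2) ^ (1 - (a + b)) * (1 / (1 - b) + 1 / (a + b - 1)))
          + ENNReal.ofReal (2 * (‖ξ‖ / 2) ^ (1 - (a + b)) * (1 / (1 - a) + 1 / (a + b - 1))) := by
        rw [lintegral_add_left (by fun_prop), truncatedKernel.lintegral_abs_sub hb1 hab hc,
          truncatedKernel.lintegral_abs_sub ha1 (by linarith) hc, add_comm b a]
    _ = ENNReal.ofReal (2 ^ (a + b) * (1 / (1 - a) + 1 / (1 - b) + 2 / (a + b - 1))
          / ‖ξ‖ ^ (a + b - 1)) := by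
        have h1a : 1 - a ≠ 0 := by linarith
        have h1b : 1 - b ≠ 0 := by linarith
        have hab1 : a + b - 1 ≠ 0 := by linarith
        have hscale : 2 * (‖ξ‖ / 2) ^ (1 - (a + b)) = 2 ^ (a + b) / ‖ξ‖ ^ (a + b - 1) := by
          rw [show 1 - (a + b) = -(a + b - 1) by ring, rpow_neg hc.le,
            div_rpow (norm_nonneg _) zero_le_two, inv_div, ← mul_div_assoc,
            ← rpow_one_add' zero_le_two (by linarith), add_sub_cancel]
        rw [← ENNReal.ofReal_add (by positivity) (by positivity), hscale]
        congr 1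
        field_simp
        ring

end Line

theorem line_integral_estimate_general
    (a b : ℝ) (ha1 : a < 1) (hb1 : b < 1)
    (hab : 1 < a + b) :
    ∃ C : ℝ, 0 < C ∧
      ∀ (ξ : EuclideanSpace ℝ (Fin 2)), ξ ≠ 0 →
        ∀ (L : AffineSubspace ℝ (EuclideanSpace ℝ (Fin 2))),
          Module.finrank ℝ L.direction = 1 →
          ∫⁻ η in (L : Set (EuclideanSpace ℝ (Fin 2))),
              ENNReal.ofReal (1 / (‖ξ - η‖ ^ a * ‖η‖ ^ b)) ∂(μH[1])
            ≤ ENNReal.ofReal (C / ‖ξ‖ ^ (a + b - 1)) := by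
  have h1a : 0 < 1 - a := by linarith
  have h1b : 0 < 1 - b := by linarith
  have hab1 : 0 < a + b - 1 := by linarith
  refine ⟨2 ^ (a + b) * (1 / (1 - a) + 1 / (1 - b) + 2 / (a + b - 1)), by positivity, ?_⟩
  intro ξ hξ L hL
  obtain ⟨p, u, hu, hLp⟩ := L.exists_norm_eq_one_range_smul_add hL
  rw [hLp, (isometry_smul_add hu p).setLIntegral_range_hausdorffMeasure_one]
  exact lintegral_one_div_rpow_mul_rpow_on_line_le ha1 hb1 hab hu p hξ

/-- For any line L in ℝ² and ξ ≠ 0, with 0 < a < 1, 0 < b < 1,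
a + b > 1, one has ∫_L |ξ − η|^{-a}|η|^{-b} dS(η) ≤ C |ξ|^{-(a+b-1)} with
C = C(a,b) independent of L and ξ. -/
theorem line_integral_estimate
    (a b : ℝ) (ha0 : 0 < a) (ha1 : a < 1) (hb0 : 0 < b) (hb1 : b < 1)
    (hab : 1 < a + b) :
    ∃ C : ℝ, 0 < C ∧
      ∀ (ξ : EuclideanSpace ℝ (Fin 2)), ξ ≠ 0 →
        ∀ (L : AffineSubspace ℝ (EuclideanSpace ℝ (Fin 2))),
          Module.finrank ℝ L.direction = 1 →
          ∫⁻ η in (L : Set (EuclideanSpace ℝ (Fin 2))),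
              ENNReal.ofReal (1 / (‖ξ - η‖ ^ a * ‖η‖ ^ b)) ∂(μH[1])
            ≤ ENNReal.ofReal (C / ‖ξ‖ ^ (a + b - 1)) :=
  line_integral_estimate_general a b ha1 hb1 hab
end

section
/- Let ε = 1/80 and ξ ∈ ℝ² with ξ ≠ 0. Then sup over r > 0 of ∫_{𝕊¹} dσ(ω) / (|ξ − r·ω|^{1−ε} · |ξ + r·ω|^{1−ε}) ≤ C/|ξ|^{2−2ε}, where dσ is the arclength measure on the unit circle 𝕊¹ and C is an absolute constant. -/
open MeasureTheory
open scoped ENNReal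

/-!
For a unit vector `ω`, expanding `‖ξ ∓ r ω‖² = ‖ξ‖² ∓ 2r⟪ξ, ω⟫ + r²` gives
`‖ξ - r ω‖² ‖ξ + r ω‖² ≥ ‖ξ‖² (‖ξ‖² - ⟪ξ, ω⟫²) = ‖ξ‖⁴ sin² θ`, where `θ` is the angle between
`ξ` and `ω`, uniformly in the radius `r`. Hence for any exponent `0 < a < 1` (here `a = 1 - ε`) the
integrand is at most `‖ξ‖^(-2a) |sin θ|^(-a)`, which is integrable in `θ` because
`|sin θ| ≥ (2/π) |θ|` near `0`. Arclength on the circle is dominated by the pushforward of Lebesgue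
measure on an interval of length `2π` under the 1-Lipschitz parametrization by the angle.
-/

namespace CircleIntegralEstimate

open Set Function Real Metric Filter
open scoped RealInnerProductSpace

lemma abs_sin_rpow_neg_le {a θ : ℝ} (ha : 0 < a) (hθ : |θ| ≤ π / 2) :
    |sin θ| ^ (-a) ≤ (2 / π) ^ (-a) * |θ| ^ (-a) := by
  rcases eq_or_ne θ 0 with rfl | hθ0
  · simp [zero_rpow (neg_ne_zero.2 ha.ne')]
  · rw [← mul_rpow (by positivity) (abs_nonneg θ)]
    exact rpow_le_rpow_of_nonpos (by positivity) (mul_abs_le_abs_sin hθ) (by linarith)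

lemma intervalIntegrable_abs_rpow_neg {a : ℝ} (ha : a < 1) (b c : ℝ) :
    IntervalIntegrable (fun θ : ℝ => |θ| ^ (-a)) volume b c := by
  have : LocallyIntegrable (fun θ : ℝ => |θ| ^ (-a)) volume :=
    locallyIntegrable_of_norm_le_rpow (C := 1) (α := a) (by simp) (by simpa using ha)
      (Eventually.of_forall fun θ => by simp [abs_of_nonneg (rpow_nonneg (abs_nonneg θ) _)])
      (continuous_abs.measurable.pow_const _).aestronglyMeasurable
  exact (this.integrableOn_isCompact isCompact_uIcc).intervalIntegrable

lemma intervalIntegrable_abs_sin_rpow_neg {a : ℝ} (ha0 : 0 < a) (ha1 : a < 1) (b c : ℝ) :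
    IntervalIntegrable (fun θ => |sin θ| ^ (-a)) volume b c := by
  have hper : Periodic (fun θ => |sin θ| ^ (-a)) π := fun θ => by simp [sin_add_pi]
  refine hper.intervalIntegrable pi_ne_zero (t := -(π / 2)) ?_ b c
  refine ((intervalIntegrable_abs_rpow_neg ha1 _ _).const_mul ((2 / π) ^ (-a))).mono_fun'
    (continuous_sin.abs.measurable.pow_const _).aestronglyMeasurable ?_
  refine (ae_restrict_mem measurableSet_uIoc).mono fun θ hθ => ?_
  rw [uIoc_of_le (by linarith [pi_pos])] at hθ
  dsimp only
  rw [norm_of_nonneg (by positivity)]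
  exact abs_sin_rpow_neg_le ha0 (abs_le.2 ⟨hθ.1.le, by linarith [hθ.2]⟩)

lemma ae_sin_ne_zero : ∀ᵐ θ : ℝ, sin θ ≠ 0 := by
  refine measure_mono_null (fun θ (hθ : ¬ sin θ ≠ 0) => ?_)
    ((countable_range fun n : ℤ => n * π).measure_zero volume)
  obtain ⟨n, hn⟩ := sin_eq_zero_iff.1 (not_not.1 hθ)
  exact ⟨n, hn⟩

noncomputable def circlePoint (θ : ℝ) : EuclideanSpace ℝ (Fin 2) :=
  Complex.orthonormalBasisOneI.repr (circleMap 0 1 θ)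

lemma lipschitzWith_circlePoint_const_add (φ : ℝ) :
    LipschitzWith 1 fun θ => circlePoint (φ + θ) :=
  LipschitzWith.of_dist_le_mul fun x y => by
    simpa [circlePoint] using (lipschitzWith_circleMap 0 1).dist_le_mul (φ + x) (φ + y)

lemma periodic_circlePoint : Periodic circlePoint (2 * π) := fun θ => by
  simp [circlePoint, periodic_circleMap 0 1 θ]

lemma range_circlePoint : range circlePoint = sphere 0 1 := by
  rw [show circlePoint = _ ∘ circleMap 0 1 from rfl, range_comp, range_circleMap]
  simp

lemma norm_circlePoint (θ : ℝ) : ‖circlePoint θ‖ = 1 := by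
  simp [circlePoint]

lemma inner_circlePoint (φ θ : ℝ) : ⟪circlePoint φ, circlePoint θ⟫ = cos (θ - φ) := by
  simp [circlePoint, Complex.inner, circleMap_zero_re, circleMap_zero_im, cos_sub]

lemma exists_eq_norm_smul_circlePoint (ξ : EuclideanSpace ℝ (Fin 2)) :
    ∃ φ, ξ = ‖ξ‖ • circlePoint φ := by
  rcases eq_or_ne ξ 0 with rfl | hξ
  · exact ⟨0, by simp⟩
  obtain ⟨φ, hφ⟩ : ‖ξ‖⁻¹ • ξ ∈ range circlePoint := by
    simp [range_circlePoint, norm_smul, hξ]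
  exact ⟨φ, by rw [hφ, smul_inv_smul₀ (norm_ne_zero_iff.2 hξ)]⟩

lemma sphere_subset_image_circlePoint_const_add (φ : ℝ) :
    sphere 0 1 ⊆ (fun θ => circlePoint (φ + θ)) '' Ioc 0 (2 * π) := by
  intro x hx
  obtain ⟨θ₀, rfl⟩ : x ∈ range circlePoint := range_circlePoint ▸ hx
  obtain ⟨θ, hθ, hθ₀⟩ :=
    (periodic_circlePoint.const_add φ).exists_mem_Ioc two_pi_pos (θ₀ - φ) 0
  rw [zero_add] at hθ
  exact ⟨θ, hθ, by simpa using hθ₀.symm⟩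

lemma setLIntegral_hausdorffMeasure_le {X : Type*} [EMetricSpace X] [MeasurableSpace X]
    [BorelSpace X] {g : ℝ → X} (hg : LipschitzWith 1 g) {S : Set X} {T : Set ℝ}
    (hST : S ⊆ g '' T) (F : X → ℝ≥0∞) :
    ∫⁻ x in S, F x ∂μH[1] ≤ ∫⁻ θ in T, F (g θ) := by
  have hle : (μH[1] : Measure X).restrict S ≤ (volume.restrict T).map g := by
    refine Measure.le_iff.2 fun s hs => ?_
    rw [Measure.restrict_apply hs, Measure.map_apply hg.continuous.measurable hs,
      Measure.restrict_apply (hg.continuous.measurable hs), ← hausdorffMeasure_real]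
    calc μH[1] (s ∩ S) ≤ μH[1] (g '' (g ⁻¹' s ∩ T)) := measure_mono fun x ⟨hxs, hxS⟩ => by
          obtain ⟨θ, hθ, rfl⟩ := hST hxS
          exact ⟨θ, ⟨hxs, hθ⟩, rfl⟩
      _ ≤ μH[1] (g ⁻¹' s ∩ T) := by simpa using hg.hausdorffMeasure_image_le zero_le_one _
  exact (lintegral_mono' hle le_rfl).trans (lintegral_map_le F g)

lemma sq_norm_mul_sub_sq_inner_le {E : Type*} [NormedAddCommGroup E] [InnerProductSpace ℝ E]
    (ξ : E) {ω : E} (hω : ‖ω‖ = 1) (r : ℝ) :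
    ‖ξ‖ ^ 2 * (‖ξ‖ ^ 2 - ⟪ξ, ω⟫ ^ 2) ≤ (‖ξ - r • ω‖ * ‖ξ + r • ω‖) ^ 2 := by
  have hsub := norm_sub_sq_real ξ (r • ω)
  have hadd := norm_add_sq_real ξ (r • ω)
  rw [norm_smul, hω, inner_smul_right, norm_eq_abs, mul_one, sq_abs] at hsub hadd
  have hc : 0 ≤ ‖ξ‖ ^ 2 - ⟪ξ, ω⟫ ^ 2 := by
    have := pow_le_pow_left₀ (abs_nonneg _) (abs_real_inner_le_norm ξ ω) 2
    rw [hω, mul_one, sq_abs] at this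
    linarith
  rw [mul_pow, hsub, hadd]
  -- with `c = ⟪ξ, ω⟫`, the difference of the two sides is `(r² - c²)² + (2r² + c²)(‖ξ‖² - c²)`
  nlinarith [mul_nonneg (sq_nonneg r) hc, mul_nonneg (sq_nonneg ⟪ξ, ω⟫) hc,
    sq_nonneg (r ^ 2 - ⟪ξ, ω⟫ ^ 2)]

lemma sq_mul_abs_sin_le {R : ℝ} (hR : 0 ≤ R) (r φ θ : ℝ) :
    R ^ 2 * |sin θ| ≤ ‖R • circlePoint φ - r • circlePoint (φ + θ)‖ *
      ‖R • circlePoint φ + r • circlePoint (φ + θ)‖ := by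
  have h := sq_norm_mul_sub_sq_inner_le (R • circlePoint φ) (norm_circlePoint (φ + θ)) r
  rw [norm_smul, norm_circlePoint, inner_smul_left, inner_circlePoint, norm_of_nonneg hR,
    mul_one, conj_trivial, add_sub_cancel_left] at h
  refine (pow_le_pow_iff_left₀ (by positivity) (by positivity) two_ne_zero).1 (le_trans ?_ h)
  rw [mul_pow, sq_abs]
  linear_combination R ^ 4 * sin_sq_add_cos_sq θ

lemma one_div_rpow_mul_rpow_le {x y z a : ℝ} (hx : 0 < x) (hxyz : x ≤ y * z) (hy : 0 ≤ y)
    (hz : 0 ≤ z) (ha : 0 ≤ a) : 1 / (y ^ a * z ^ a) ≤ x ^ (-a) := by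
  rw [← mul_rpow hy hz, one_div, ← rpow_neg (mul_nonneg hy hz)]
  exact rpow_le_rpow_of_nonpos hx hxyz (neg_nonpos.2 ha)

theorem exists_lintegral_sphere_le {a : ℝ} (ha0 : 0 < a) (ha1 : a < 1) :
    ∃ C : ℝ, 0 < C ∧ ∀ ξ : EuclideanSpace ℝ (Fin 2), ξ ≠ 0 → ∀ r : ℝ,
      ∫⁻ ω in sphere (0 : EuclideanSpace ℝ (Fin 2)) 1,
          ENNReal.ofReal (1 / (‖ξ - r • ω‖ ^ a * ‖ξ + r • ω‖ ^ a)) ∂μH[1]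
        ≤ ENNReal.ofReal (C / ‖ξ‖ ^ (2 * a)) := by
  set M := ∫⁻ θ in Ioc 0 (2 * π), ENNReal.ofReal (|sin θ| ^ (-a))
  have hM : M ≠ ∞ :=
    (intervalIntegrable_abs_sin_rpow_neg ha0 ha1 0 (2 * π)).1.lintegral_lt_top.ne
  refine ⟨M.toReal + 1, by positivity, fun ξ hξ r => ?_⟩
  obtain ⟨φ, hφ⟩ := exists_eq_norm_smul_circlePoint ξ
  have hR : 0 < ‖ξ‖ := norm_pos_iff.2 hξ
  have hpoint : ∀ θ, sin θ ≠ 0 →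
      ENNReal.ofReal
          (1 / (‖ξ - r • circlePoint (φ + θ)‖ ^ a * ‖ξ + r • circlePoint (φ + θ)‖ ^ a))
        ≤ ENNReal.ofReal ((‖ξ‖ ^ 2) ^ (-a)) * ENNReal.ofReal (|sin θ| ^ (-a)) := by
    intro θ hθ
    rw [← ENNReal.ofReal_mul (by positivity), ← mul_rpow (by positivity) (abs_nonneg _)]
    refine ENNReal.ofReal_le_ofReal (one_div_rpow_mul_rpow_le (by positivity) ?_
      (norm_nonneg _) (norm_nonneg _) ha0.le)
    simpa only [← hφ] using sq_mul_abs_sin_le hR.le r φ θ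
  calc _ ≤ ∫⁻ θ in Ioc 0 (2 * π), ENNReal.ofReal
          (1 / (‖ξ - r • circlePoint (φ + θ)‖ ^ a * ‖ξ + r • circlePoint (φ + θ)‖ ^ a)) :=
        setLIntegral_hausdorffMeasure_le (lipschitzWith_circlePoint_const_add φ)
          (sphere_subset_image_circlePoint_const_add φ) _
    _ ≤ ∫⁻ θ in Ioc 0 (2 * π),
          ENNReal.ofReal ((‖ξ‖ ^ 2) ^ (-a)) * ENNReal.ofReal (|sin θ| ^ (-a)) :=
        lintegral_mono_ae (ae_restrict_of_ae (ae_sin_ne_zero.mono hpoint))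
    _ = ENNReal.ofReal ((‖ξ‖ ^ 2) ^ (-a)) * M := lintegral_const_mul' _ _ ENNReal.ofReal_ne_top
    _ ≤ ENNReal.ofReal ((‖ξ‖ ^ 2) ^ (-a)) * ENNReal.ofReal (M.toReal + 1) := by
        gcongr
        exact (ENNReal.le_ofReal_iff_toReal_le hM (by positivity)).2 (by linarith)
    _ = ENNReal.ofReal ((M.toReal + 1) / ‖ξ‖ ^ (2 * a)) := by
        rw [← ENNReal.ofReal_mul (by positivity), ← rpow_natCast, ← rpow_mul hR.le, mul_neg,
          rpow_neg hR.le, Nat.cast_ofNat, div_eq_mul_inv, mul_comm]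

end CircleIntegralEstimate

/-- With ε = 1/80, uniformly over all radii r > 0,
∫_{𝕊¹} |ξ − rω|^{-(1-ε)} |ξ + rω|^{-(1-ε)} dσ(ω) ≤ C |ξ|^{-(2-2ε)}. -/
theorem circle_integral_estimate :
    ∃ C : ℝ, 0 < C ∧
      ∀ (ξ : EuclideanSpace ℝ (Fin 2)), ξ ≠ 0 →
        ∀ r : ℝ, 0 < r →
          ∫⁻ ω in Metric.sphere (0 : EuclideanSpace ℝ (Fin 2)) 1,
              ENNReal.ofReal
                (1 / (‖ξ - r • ω‖ ^ (1 - (1/80 : ℝ)) * ‖ξ + r • ω‖ ^ (1 - (1/80 : ℝ))))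
              ∂(μH[1])
            ≤ ENNReal.ofReal (C / ‖ξ‖ ^ (2 - 2 * (1/80 : ℝ))) := by
  obtain ⟨C, hC, hbound⟩ :=
    CircleIntegralEstimate.exists_lintegral_sphere_le (a := 1 - 1 / 80) (by norm_num) (by norm_num)
  refine ⟨C, hC, fun ξ hξ r _ => ?_⟩
  rw [show (2 : ℝ) - 2 * (1 / 80) = 2 * (1 - 1 / 80) by norm_num]
  exact hbound ξ hξ r
end

section
/- Let K₁(t,x,y) = (2πit)^{-1/2}·exp(i(x−y)²/(2t)) be the Green's function of the 1d free Schrödinger equation i∂_t v = −(1/2)∂_x²v. Let η : ℝ → ℝ be continuous, let α, β solve α''+ηα=0, α(0)=0, α'(0)=1 and β''+ηβ=0, β(0)=1, β'(0)=0, and suppose β ≠ 0 on [0,T]. If v(t,x) solves the free equation with v(0,·) = f ∈ 𝒮(ℝ), then u(τ,y) := β(τ)^{-1/2}·exp(i·(β'(τ)/β(τ))·y²/2)·v(α(τ)/β(τ), y/β(τ)) solves i∂_τ u = (−(1/2)∂_y² + η(τ)y²/2)·u on [0,T]×ℝ with u(0,·) = f. -/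
open Real Set Complex

private lemma lens_hasDerivAt_comp2 (v : ℝ → ℝ → ℂ) (h : ContDiff ℝ (⊤ : ℕ∞) (Function.uncurry v))
    {p q : ℝ → ℝ} {p' q' : ℝ} {σ : ℝ}
    (hp : HasDerivAt p p' σ) (hq : HasDerivAt q q' σ) :
    HasDerivAt (fun s => v (p s) (q s))
      (p' • deriv (fun s => v s (q σ)) (p σ) + q' • deriv (v (p σ)) (q σ)) σ := by
  set L := fderiv ℝ (Function.uncurry v) (p σ, q σ) with hLdef
  have hdiff : DifferentiableAt ℝ (Function.uncurry v) (p σ, q σ) :=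
    (h.differentiable (by simp)) _
  have hL : HasFDerivAt (Function.uncurry v) L (p σ, q σ) := hdiff.hasFDerivAt
  have hin1 : HasDerivAt (fun s : ℝ => (s, q σ)) ((1:ℝ), (0:ℝ)) (p σ) :=
    (hasDerivAt_id _).prodMk (hasDerivAt_const _ _)
  have hin2 : HasDerivAt (fun x : ℝ => (p σ, x)) ((0:ℝ), (1:ℝ)) (q σ) :=
    (hasDerivAt_const _ _).prodMk (hasDerivAt_id _)
  have h1 : HasDerivAt (fun s => v s (q σ)) (L (1, 0)) (p σ) :=
    by have := hL.comp_hasDerivAt (p σ) hin1; exact this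
  have h2 : HasDerivAt (fun x => v (p σ) x) (L (0, 1)) (q σ) :=
    hL.comp_hasDerivAt (q σ) hin2
  have h3 : HasDerivAt (fun s => v (p s) (q s)) (L (p', q')) σ :=
    by have := hL.comp_hasDerivAt σ (hp.prodMk hq); exact this
  have he : L (p', q') = p' • L (1,0) + q' • L (0,1) := by
    have hpt : (p', q') = p' • ((1:ℝ), (0:ℝ)) + q' • ((0:ℝ), (1:ℝ)) := by
      simp [Prod.ext_iff]
    rw [hpt, map_add, map_smul, map_smul]
  rw [h1.deriv, h2.deriv]
  rwa [he] at h3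

/-- The 1d generalized lens transform: if v solves the free
Schrödinger equation i∂_t v = −(1/2)∂_x²v with v(0,·) = f, and β ≠ 0 on [0,T],
then u(τ,y) = β(τ)^{-1/2} exp(i (β'(τ)/β(τ)) y²/2) v(α(τ)/β(τ), y/β(τ)) solves
i∂_τ u = (−(1/2)∂_y² + η(τ) y²/2) u on [0,T] × ℝ with u(0,·) = f. -/
theorem generalized_lens_transform
    (η α β α' β' : ℝ → ℝ) (hη : Continuous η)
    (hα : ∀ τ, HasDerivAt α (α' τ) τ)
    (hα' : ∀ τ, HasDerivAt α' (-(η τ * α τ)) τ)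
    (hα0 : α 0 = 0) (hα'0 : α' 0 = 1)
    (hβ : ∀ τ, HasDerivAt β (β' τ) τ)
    (hβ' : ∀ τ, HasDerivAt β' (-(η τ * β τ)) τ)
    (hβ0 : β 0 = 1) (hβ'0 : β' 0 = 0)
    (T : ℝ) (hT : 0 < T) (hβne : ∀ τ ∈ Set.Icc (0:ℝ) T, β τ ≠ 0)
    (f : ℝ → ℂ) (v : ℝ → ℝ → ℂ)
    (hvsm : ContDiff ℝ (⊤ : ℕ∞) (Function.uncurry v))
    (hv : ∀ t x : ℝ,
      Complex.I * deriv (fun s => v s x) t = -(1/2 : ℂ) * deriv (deriv (v t)) x)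
    (hv0 : ∀ x : ℝ, v 0 x = f x) :
    (∀ y : ℝ,
        ((Real.sqrt (β 0) : ℂ))⁻¹
            * Complex.exp (Complex.I * ((β' 0 / β 0 * y ^ 2 / 2 : ℝ) : ℂ))
            * v (α 0 / β 0) (y / β 0)
          = f y)
    ∧ ∀ τ ∈ Set.Icc (0:ℝ) T, ∀ y : ℝ,
        Complex.I * deriv (fun σ =>
            ((Real.sqrt (β σ) : ℂ))⁻¹
              * Complex.exp (Complex.I * ((β' σ / β σ * y ^ 2 / 2 : ℝ) : ℂ))
              * v (α σ / β σ) (y / β σ)) τ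
          = -(1/2 : ℂ) * deriv (deriv (fun z : ℝ =>
                ((Real.sqrt (β τ) : ℂ))⁻¹
                  * Complex.exp (Complex.I * ((β' τ / β τ * z ^ 2 / 2 : ℝ) : ℂ))
                  * v (α τ / β τ) (z / β τ))) y
            + ((η τ * y ^ 2 / 2 : ℝ) : ℂ)
              * (((Real.sqrt (β τ) : ℂ))⁻¹
                  * Complex.exp (Complex.I * ((β' τ / β τ * y ^ 2 / 2 : ℝ) : ℂ))
                  * v (α τ / β τ) (y / β τ)) := by
  have hW : ∀ σ, α' σ * β σ - α σ * β' σ = 1 := by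
    have hd : ∀ σ, HasDerivAt (fun σ => α' σ * β σ - α σ * β' σ) 0 σ := by
      intro σ
      have h := ((hα' σ).mul (hβ σ)).sub ((hα σ).mul (hβ' σ))
      exact h.congr_deriv (by ring)
    intro σ
    have hc := is_const_of_deriv_eq_zero (f := fun σ => α' σ * β σ - α σ * β' σ)
      (fun x => (hd x).differentiableAt) (fun x => (hd x).deriv) σ 0
    rw [hc]
    rw [hα0, hα'0, hβ0, hβ'0]
    ring
  have hbpos : ∀ τ ∈ Set.Icc (0:ℝ) T, 0 < β τ := by
    intro τ hτ
    by_contra hcon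
    push_neg at hcon
    have hlt : β τ < 0 := lt_of_le_of_ne hcon (hβne τ hτ)
    have hcont : ContinuousOn β (Set.Icc 0 τ) := fun x _ =>
      ((hβ x).continuousAt).continuousWithinAt
    have hmem : (0:ℝ) ∈ Set.Icc (β τ) (β 0) := by
      constructor
      · linarith
      · rw [hβ0]; norm_num
    obtain ⟨c, hc, hc0⟩ := intermediate_value_Icc' hτ.1 hcont hmem
    exact hβne c ⟨hc.1, hc.2.trans hτ.2⟩ hc0
  constructor
  · intro y
    simp [hβ0, hα0, hβ'0, Real.sqrt_one, hv0]
  · intro τ hτ y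
    have hb : 0 < β τ := hbpos τ hτ
    have hbne : β τ ≠ 0 := ne_of_gt hb
    have hbCne : ((β τ : ℝ) : ℂ) ≠ 0 := Complex.ofReal_ne_zero.mpr hbne
    have hs : 0 < Real.sqrt (β τ) := Real.sqrt_pos.mpr hb
    have hsne : Real.sqrt (β τ) ≠ 0 := ne_of_gt hs
    have hsCne : ((Real.sqrt (β τ) : ℝ) : ℂ) ≠ 0 := Complex.ofReal_ne_zero.mpr hsne
    have hs2 : Real.sqrt (β τ) ^ 2 = β τ := Real.sq_sqrt hb.le
    have hs2C : ((Real.sqrt (β τ) : ℝ) : ℂ) ^ 2 = ((β τ : ℝ) : ℂ) := by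
      exact_mod_cast congrArg (fun x : ℝ => (x : ℂ)) hs2
    set t0 := α τ / β τ with ht0
    set x0 := y / β τ with hx0
    -- smoothness facts
    have hvt : ContDiff ℝ (⊤ : ℕ∞) (v t0) := hvsm.comp (contDiff_const.prodMk contDiff_id)
    have hvtd : Differentiable ℝ (v t0) := hvt.differentiable (by simp)
    have hQd : Differentiable ℝ (deriv (v t0)) := by
      have h2 : ContDiff ℝ (⊤:ℕ∞) (v t0) := hvt.of_le (by simp)
      exact ((contDiff_infty_iff_deriv.mp h2).2).differentiable (by simp)
    -- the time derivative
    have h1 : HasDerivAt (fun σ => ((Real.sqrt (β σ) : ℂ))⁻¹)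
        (-(((1/(2*Real.sqrt (β τ)) * β' τ : ℝ)) : ℂ) / ((Real.sqrt (β τ) : ℂ))^2) τ := by
      have hsq : HasDerivAt (fun σ => Real.sqrt (β σ)) (1/(2*Real.sqrt (β τ)) * β' τ) τ :=
        HasDerivAt.comp (𝕜' := ℝ) τ (Real.hasDerivAt_sqrt hbne) (hβ τ)
      have hinv : HasDerivAt (fun σ => (Real.sqrt (β σ))⁻¹)
          (-(1/(2*Real.sqrt (β τ)) * β' τ) / (Real.sqrt (β τ))^2) τ := hsq.inv hsne
      have h := hinv.ofReal_comp
      simp only [Complex.ofReal_inv] at h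
      convert h using 1
      push_cast
      ring
    have h2 : HasDerivAt (fun σ => Complex.exp (Complex.I * ((β' σ / β σ * y ^ 2 / 2 : ℝ) : ℂ)))
        (Complex.exp (Complex.I * ((β' τ / β τ * y ^ 2 / 2 : ℝ) : ℂ)) *
          (Complex.I * (((-(η τ * β τ) * β τ - β' τ * β' τ) / β τ ^ 2 * y ^ 2 / 2 : ℝ) : ℂ))) τ := by
      have hr : HasDerivAt (fun σ => β' σ / β σ * y ^ 2 / 2)
          ((-(η τ * β τ) * β τ - β' τ * β' τ) / β τ ^ 2 * y ^ 2 / 2) τ :=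
        (((hβ' τ).div (hβ τ) hbne).mul_const _).div_const _
      exact (hr.ofReal_comp.const_mul Complex.I).cexp
    have h3 : HasDerivAt (fun σ => v (α σ / β σ) (y / β σ))
        (((α' τ * β τ - α τ * β' τ) / β τ ^ 2) • deriv (fun s => v s x0) t0
          + ((0 * β τ - y * β' τ) / β τ ^ 2) • deriv (v t0) x0) τ := by
      have hp : HasDerivAt (fun σ => α σ / β σ) ((α' τ * β τ - α τ * β' τ) / β τ ^ 2) τ :=
        (hα τ).div (hβ τ) hbne
      have hq : HasDerivAt (fun σ => y / β σ) ((0 * β τ - y * β' τ) / β τ ^ 2) τ :=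
        (hasDerivAt_const τ y).div (hβ τ) hbne
      exact lens_hasDerivAt_comp2 v hvsm hp hq
    have hGfull : HasDerivAt (fun σ =>
        ((Real.sqrt (β σ) : ℂ))⁻¹
          * Complex.exp (Complex.I * ((β' σ / β σ * y ^ 2 / 2 : ℝ) : ℂ))
          * v (α σ / β σ) (y / β σ))
        ((-(((1/(2*Real.sqrt (β τ)) * β' τ : ℝ)) : ℂ) / ((Real.sqrt (β τ) : ℂ))^2
            * Complex.exp (Complex.I * ((β' τ / β τ * y ^ 2 / 2 : ℝ) : ℂ))
          + ((Real.sqrt (β τ) : ℂ))⁻¹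
            * (Complex.exp (Complex.I * ((β' τ / β τ * y ^ 2 / 2 : ℝ) : ℂ)) *
              (Complex.I * (((-(η τ * β τ) * β τ - β' τ * β' τ) / β τ ^ 2 * y ^ 2 / 2 : ℝ) : ℂ))))
          * v t0 x0
         + ((Real.sqrt (β τ) : ℂ))⁻¹
             * Complex.exp (Complex.I * ((β' τ / β τ * y ^ 2 / 2 : ℝ) : ℂ))
             * (((α' τ * β τ - α τ * β' τ) / β τ ^ 2) • deriv (fun s => v s x0) t0
                + ((0 * β τ - y * β' τ) / β τ ^ 2) • deriv (v t0) x0)) τ :=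
      (h1.mul h2).mul h3
    -- the spatial derivatives
    set F1 : ℝ → ℂ := fun z =>
      ((Real.sqrt (β τ) : ℂ))⁻¹ * Complex.exp (Complex.I * ((β' τ / β τ * z ^ 2 / 2 : ℝ) : ℂ))
        * (Complex.I * ((β' τ / β τ * z : ℝ) : ℂ) * v t0 (z / β τ)
            + ((β τ : ℝ) : ℂ)⁻¹ * deriv (v t0) (z / β τ)) with hF1def
    have hF1 : ∀ z : ℝ, HasDerivAt (fun z : ℝ =>
        ((Real.sqrt (β τ) : ℂ))⁻¹
          * Complex.exp (Complex.I * ((β' τ / β τ * z ^ 2 / 2 : ℝ) : ℂ))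
          * v t0 (z / β τ)) (F1 z) z := by
      intro z
      have hE : HasDerivAt (fun z : ℝ =>
          Complex.exp (Complex.I * ((β' τ / β τ * z ^ 2 / 2 : ℝ) : ℂ)))
          (Complex.exp (Complex.I * ((β' τ / β τ * z ^ 2 / 2 : ℝ) : ℂ)) *
            (Complex.I * ((β' τ / β τ * ((2:ℕ) * z ^ (2-1)) / 2 : ℝ) : ℂ))) z :=
        ((((hasDerivAt_pow 2 z).const_mul (β' τ / β τ)).div_const 2).ofReal_comp.const_mul
          Complex.I).cexp
      have hV : HasDerivAt (fun w : ℝ => v t0 (w / β τ))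
          ((1 / β τ) • deriv (v t0) (z / β τ)) z :=
        HasDerivAt.scomp z ((hvtd (z / β τ)).hasDerivAt) ((hasDerivAt_id z).div_const (β τ))
      have h := (hE.const_mul (((Real.sqrt (β τ) : ℂ))⁻¹)).mul hV
      have goal : HasDerivAt (fun z : ℝ =>
          ((Real.sqrt (β τ) : ℂ))⁻¹
            * Complex.exp (Complex.I * ((β' τ / β τ * z ^ 2 / 2 : ℝ) : ℂ))
            * v t0 (z / β τ)) _ z := h
      convert goal using 1
      rw [hF1def]
      simp only [Complex.real_smul]
      push_cast
      ring
    have hdF : deriv (fun z : ℝ =>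
        ((Real.sqrt (β τ) : ℂ))⁻¹
          * Complex.exp (Complex.I * ((β' τ / β τ * z ^ 2 / 2 : ℝ) : ℂ))
          * v t0 (z / β τ)) = F1 := funext fun z => (hF1 z).deriv
    have hF2 : HasDerivAt F1
        ((((Real.sqrt (β τ) : ℂ))⁻¹ * (Complex.exp (Complex.I * ((β' τ / β τ * y ^ 2 / 2 : ℝ) : ℂ)) *
            (Complex.I * ((β' τ / β τ * ((2:ℕ) * y ^ (2-1)) / 2 : ℝ) : ℂ))))
          * (Complex.I * ((β' τ / β τ * y : ℝ) : ℂ) * v t0 x0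
              + ((β τ : ℝ) : ℂ)⁻¹ * deriv (v t0) x0)
         + (((Real.sqrt (β τ) : ℂ))⁻¹ * Complex.exp (Complex.I * ((β' τ / β τ * y ^ 2 / 2 : ℝ) : ℂ)))
            * ((Complex.I * ((β' τ / β τ * 1 : ℝ) : ℂ) * v t0 x0
                + Complex.I * ((β' τ / β τ * y : ℝ) : ℂ) * ((1 / β τ) • deriv (v t0) x0))
               + ((β τ : ℝ) : ℂ)⁻¹ * ((1 / β τ) • deriv (deriv (v t0)) x0))) y := by
      have hE : HasDerivAt (fun z : ℝ =>
          Complex.exp (Complex.I * ((β' τ / β τ * z ^ 2 / 2 : ℝ) : ℂ)))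
          (Complex.exp (Complex.I * ((β' τ / β τ * y ^ 2 / 2 : ℝ) : ℂ)) *
            (Complex.I * ((β' τ / β τ * ((2:ℕ) * y ^ (2-1)) / 2 : ℝ) : ℂ))) y :=
        ((((hasDerivAt_pow 2 y).const_mul (β' τ / β τ)).div_const 2).ofReal_comp.const_mul
          Complex.I).cexp
      have hV : HasDerivAt (fun w : ℝ => v t0 (w / β τ))
          ((1 / β τ) • deriv (v t0) x0) y :=
        HasDerivAt.scomp y ((hvtd (y / β τ)).hasDerivAt) ((hasDerivAt_id y).div_const (β τ))
      have hlin : HasDerivAt (fun z : ℝ => Complex.I * ((β' τ / β τ * z : ℝ) : ℂ))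
          (Complex.I * ((β' τ / β τ * 1 : ℝ) : ℂ)) y :=
        (((hasDerivAt_id y).const_mul (β' τ / β τ)).ofReal_comp).const_mul Complex.I
      have hA : HasDerivAt (fun z : ℝ =>
          Complex.I * ((β' τ / β τ * z : ℝ) : ℂ) * v t0 (z / β τ))
          (Complex.I * ((β' τ / β τ * 1 : ℝ) : ℂ) * v t0 x0
            + Complex.I * ((β' τ / β τ * y : ℝ) : ℂ) * ((1 / β τ) • deriv (v t0) x0)) y :=
        hlin.mul hV
      have hQ : HasDerivAt (fun w : ℝ => deriv (v t0) (w / β τ))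
          ((1 / β τ) • deriv (deriv (v t0)) x0) y :=
        by have := HasDerivAt.scomp y ((hQd (y / β τ)).hasDerivAt) ((hasDerivAt_id y).div_const (β τ)); exact this
      have hB : HasDerivAt (fun z : ℝ => ((β τ : ℝ) : ℂ)⁻¹ * deriv (v t0) (z / β τ))
          (((β τ : ℝ) : ℂ)⁻¹ * ((1 / β τ) • deriv (deriv (v t0)) x0)) y :=
        hQ.const_mul _
      exact (hE.const_mul (((Real.sqrt (β τ) : ℂ))⁻¹)).mul (hA.add hB)
    -- assemble
    rw [hGfull.deriv, hdF, hF2.deriv]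
    have hR : deriv (deriv (v t0)) x0 = (-2*Complex.I) * deriv (fun s => v s x0) t0 := by
      linear_combination 2 * hv t0 x0
    rw [hR, hW τ]
    simp only [Complex.real_smul]
    push_cast
    rw [show ((β τ : ℝ) : ℂ) = ((Real.sqrt (β τ) : ℝ) : ℂ)^2 from hs2C.symm]
    have hI : (Complex.I)^2 = -1 := Complex.I_sq
    have hss : (((Real.sqrt (β τ) : ℝ) : ℂ))^4 * ((((Real.sqrt (β τ) : ℝ) : ℂ))⁻¹)^5
        = (((Real.sqrt (β τ) : ℝ) : ℂ))⁻¹ := by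
      field_simp
    linear_combination (-(((η τ) : ℂ)) * (y:ℂ)^2 *
      Complex.exp (Complex.I * (((β' τ) : ℂ) / ((Real.sqrt (β τ) : ℝ) : ℂ)^2 * (y:ℂ)^2 / 2)) *
      v t0 x0 * (((Real.sqrt (β τ) : ℝ) : ℂ))^4 * ((((Real.sqrt (β τ) : ℝ) : ℂ))⁻¹)^5 / 2) * hI
      + (Complex.exp (Complex.I * (((β' τ) : ℂ) / ((Real.sqrt (β τ) : ℝ) : ℂ)^2 * (y:ℂ)^2 / 2))
          * (((η τ) : ℂ)) * (y:ℂ)^2 * v t0 x0 / 2) * hss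
end

section
/- Let η be continuous, β solve β'' + ηβ = 0, β(0)=1, β'(0)=0, and define the operator P(τ) = −iβ(τ)∂_y − β'(τ)y on Schwartz functions. Then P(τ) commutes with the Schrödinger operator in the sense that for any smooth solution u(τ,y) of i∂_τ u = (−(1/2)∂_y² + η(τ)y²/2)u, the function (P(τ)u)(τ,y) also solves the same equation. -/
open Complex

noncomputable def Dyy (f : ℝ × ℝ → ℂ) : ℝ × ℝ → ℂ := fun p => fderiv ℝ f p (0, 1)
noncomputable def Dtt (f : ℝ × ℝ → ℂ) : ℝ × ℝ → ℂ := fun p => fderiv ℝ f p (1, 0)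

private lemma sectR {f : ℝ × ℝ → ℂ} (hf : ContDiff ℝ (⊤ : ℕ∞) f) (σ y : ℝ) :
    HasDerivAt (fun z => f (σ, z)) (Dyy f (σ, y)) y := by
  have h1 : HasDerivAt (fun z : ℝ => ((σ, z) : ℝ × ℝ)) ((0 : ℝ), (1 : ℝ)) y :=
    (hasDerivAt_const y σ).prodMk (hasDerivAt_id y)
  exact ((hf.differentiable (by simp) (σ, y)).hasFDerivAt.comp_hasDerivAt y h1)

private lemma sectL {f : ℝ × ℝ → ℂ} (hf : ContDiff ℝ (⊤ : ℕ∞) f) (τ y : ℝ) :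
    HasDerivAt (fun σ => f (σ, y)) (Dtt f (τ, y)) τ := by
  have h1 : HasDerivAt (fun σ : ℝ => ((σ, y) : ℝ × ℝ)) ((1 : ℝ), (0 : ℝ)) τ :=
    (hasDerivAt_id τ).prodMk (hasDerivAt_const τ y)
  exact ((hf.differentiable (by simp) (τ, y)).hasFDerivAt.comp_hasDerivAt τ h1)

private lemma Dyy_smooth {f : ℝ × ℝ → ℂ} (hf : ContDiff ℝ (⊤ : ℕ∞) f) : ContDiff ℝ (⊤ : ℕ∞) (Dyy f) :=
  (hf.fderiv_right (by simp)).clm_apply contDiff_const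

private lemma Dtt_smooth {f : ℝ × ℝ → ℂ} (hf : ContDiff ℝ (⊤ : ℕ∞) f) : ContDiff ℝ (⊤ : ℕ∞) (Dtt f) :=
  (hf.fderiv_right (by simp)).clm_apply contDiff_const

private lemma clairaut {f : ℝ × ℝ → ℂ} (hf : ContDiff ℝ (⊤ : ℕ∞) f) (p : ℝ × ℝ) :
    Dyy (Dtt f) p = Dtt (Dyy f) p := by
  have hd : DifferentiableAt ℝ (fderiv ℝ f) p :=
    ((hf.fderiv_right (m := (⊤ : ℕ∞)) (by simp)).differentiable (by simp)) p
  have h1 : Dyy (Dtt f) p = fderiv ℝ (fderiv ℝ f) p (0, 1) (1, 0) := by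
    show fderiv ℝ (fun q => fderiv ℝ f q (1, 0)) p (0, 1) = _
    rw [fderiv_clm_apply hd (differentiableAt_const _)]
    simp
  have h2 : Dtt (Dyy f) p = fderiv ℝ (fderiv ℝ f) p (1, 0) (0, 1) := by
    show fderiv ℝ (fun q => fderiv ℝ f q (0, 1)) p (1, 0) = _
    rw [fderiv_clm_apply hd (differentiableAt_const _)]
    simp
  rw [h1, h2]
  exact hf.contDiffAt.isSymmSndFDerivAt (by rw [minSmoothness_of_isRCLikeNormedField]; exact WithTop.coe_le_coe.mpr (le_top : (2 : ℕ∞) ≤ ⊤)) _ _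

/-- The evolved momentum operator P(τ) = −iβ(τ)∂_y − β'(τ)y maps
solutions of the quadratic-trap Schrödinger equation
i∂_τ u = (−(1/2)∂_y² + η(τ)y²/2)u to solutions of the same equation. -/
theorem evolved_momentum_commutes
    (η β β' : ℝ → ℝ) (hη : Continuous η)
    (hβ : ∀ τ, HasDerivAt β (β' τ) τ)
    (hβ' : ∀ τ, HasDerivAt β' (-(η τ * β τ)) τ)
    (hβ0 : β 0 = 1) (hβ'0 : β' 0 = 0)
    (u : ℝ → ℝ → ℂ)
    (husm : ContDiff ℝ (⊤ : ℕ∞) (Function.uncurry u))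
    (hu : ∀ τ y : ℝ,
      Complex.I * deriv (fun σ => u σ y) τ
        = -(1/2 : ℂ) * deriv (deriv (u τ)) y + ((η τ * y ^ 2 / 2 : ℝ) : ℂ) * u τ y) :
    ∀ τ y : ℝ,
      Complex.I * deriv (fun σ =>
          -Complex.I * (β σ : ℂ) * deriv (u σ) y - ((β' σ * y : ℝ) : ℂ) * u σ y) τ
        = -(1/2 : ℂ) * deriv (deriv (fun z : ℝ =>
              -Complex.I * (β τ : ℂ) * deriv (u τ) z - ((β' τ * z : ℝ) : ℂ) * u τ z)) y
          + ((η τ * y ^ 2 / 2 : ℝ) : ℂ)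
            * (-Complex.I * (β τ : ℂ) * deriv (u τ) y - ((β' τ * y : ℝ) : ℂ) * u τ y) := by
  intro τ y
  set f : ℝ × ℝ → ℂ := Function.uncurry u with hf_def
  have hf : ContDiff ℝ (⊤ : ℕ∞) f := husm
  have hg1 : ContDiff ℝ (⊤ : ℕ∞) (Dyy f) := Dyy_smooth hf
  have hg2 : ContDiff ℝ (⊤ : ℕ∞) (Dyy (Dyy f)) := Dyy_smooth hg1
  have ht0 : ContDiff ℝ (⊤ : ℕ∞) (Dtt f) := Dtt_smooth hf
  -- first partial derivative in y
  have E1 : ∀ σ z : ℝ, deriv (u σ) z = Dyy f (σ, z) := fun σ z => (sectR hf σ z).deriv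
  have E2 : ∀ σ z : ℝ, deriv (deriv (u σ)) z = Dyy (Dyy f) (σ, z) := by
    intro σ z
    have : deriv (u σ) = fun z => Dyy f (σ, z) := funext fun z => E1 σ z
    rw [this]
    exact (sectR hg1 σ z).deriv
  -- the PDE in partial-derivative form
  have hu' : ∀ σ z : ℝ, Dtt f (σ, z) =
      -Complex.I * (-(1/2 : ℂ) * Dyy (Dyy f) (σ, z)
        + ((η σ * z ^ 2 / 2 : ℝ) : ℂ) * f (σ, z)) := by
    intro σ z
    have h := hu σ z
    rw [show (fun σ' => u σ' z) = (fun σ' => f (σ', z)) from rfl] at h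
    rw [(sectL hf σ z).deriv] at h
    rw [E2 σ z] at h
    have : Dtt f (σ, z) = -Complex.I * (Complex.I * Dtt f (σ, z)) := by
      rw [← mul_assoc, neg_mul, Complex.I_mul_I, neg_neg, one_mul]
    rw [this, h]
    rfl
  -- mixed partial: Dtt (Dyy f) (τ,y) computed from the PDE
  have hq : HasDerivAt (fun z : ℝ => (η τ * z ^ 2 / 2 : ℝ)) (η τ * (2 * y ^ 1) / 2) y :=
    ((hasDerivAt_pow 2 y).const_mul (η τ)).div_const 2
  have hmix : Dtt (Dyy f) (τ, y) =
      -Complex.I * (-(1/2 : ℂ) * Dyy (Dyy (Dyy f)) (τ, y)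
        + ((η τ * (2 * y ^ 1) / 2 : ℝ) : ℂ) * f (τ, y)
        + ((η τ * y ^ 2 / 2 : ℝ) : ℂ) * Dyy f (τ, y)) := by
    have hfun : (fun z => Dtt f (τ, z)) = fun z =>
        -Complex.I * (-(1/2 : ℂ) * Dyy (Dyy f) (τ, z)
          + ((η τ * z ^ 2 / 2 : ℝ) : ℂ) * f (τ, z)) := funext fun z => hu' τ z
    have hR : HasDerivAt (fun z =>
        -Complex.I * (-(1/2 : ℂ) * Dyy (Dyy f) (τ, z)
          + ((η τ * z ^ 2 / 2 : ℝ) : ℂ) * f (τ, z)))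
        (-Complex.I * (-(1/2 : ℂ) * Dyy (Dyy (Dyy f)) (τ, y)
          + (((η τ * (2 * y ^ 1) / 2 : ℝ) : ℂ) * f (τ, y)
            + ((η τ * y ^ 2 / 2 : ℝ) : ℂ) * Dyy f (τ, y)))) y := by
      exact (((sectR hg2 τ y).const_mul (-(1/2 : ℂ))).add
        (hq.ofReal_comp.mul (sectR hf τ y))).const_mul (-Complex.I)
    rw [← hfun] at hR
    have := hR.unique (sectR ht0 τ y)
    rw [← clairaut hf (τ, y)]
    rw [← this]
    ring
  -- LHS time derivative
  have hb2 : HasDerivAt (fun σ => -Complex.I * (β σ : ℂ)) (-Complex.I * (β' τ : ℂ)) τ :=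
    (hβ τ).ofReal_comp.const_mul (-Complex.I)
  have hbp : HasDerivAt (fun σ => ((β' σ * y : ℝ) : ℂ)) (((-(η τ * β τ) * y : ℝ) : ℂ)) τ :=
    ((hβ' τ).mul_const y).ofReal_comp
  have hL : deriv (fun σ =>
      -Complex.I * (β σ : ℂ) * deriv (u σ) y - ((β' σ * y : ℝ) : ℂ) * u σ y) τ
      = (-Complex.I * (β' τ : ℂ) * Dyy f (τ, y) + (-Complex.I * (β τ : ℂ)) * Dtt (Dyy f) (τ, y))
        - (((-(η τ * β τ) * y : ℝ) : ℂ) * f (τ, y) + ((β' τ * y : ℝ) : ℂ) * Dtt f (τ, y)) := by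
    have hfun : (fun σ => -Complex.I * (β σ : ℂ) * deriv (u σ) y - ((β' σ * y : ℝ) : ℂ) * u σ y)
        = fun σ => (-Complex.I * (β σ : ℂ)) * Dyy f (σ, y) - ((β' σ * y : ℝ) : ℂ) * f (σ, y) := by
      funext σ
      rw [E1 σ y]
      rfl
    rw [hfun]
    exact ((hb2.mul (sectL hg1 τ y)).sub (hbp.mul (sectL hf τ y))).deriv
  -- RHS spatial derivatives
  have hG1 : deriv (fun z : ℝ =>
      -Complex.I * (β τ : ℂ) * deriv (u τ) z - ((β' τ * z : ℝ) : ℂ) * u τ z)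
      = fun z => (-Complex.I * (β τ : ℂ)) * Dyy (Dyy f) (τ, z)
        - (((β' τ * 1 : ℝ) : ℂ) * f (τ, z) + ((β' τ * z : ℝ) : ℂ) * Dyy f (τ, z)) := by
    funext z
    have hfun : (fun z : ℝ =>
        -Complex.I * (β τ : ℂ) * deriv (u τ) z - ((β' τ * z : ℝ) : ℂ) * u τ z)
        = fun z => (-Complex.I * (β τ : ℂ)) * Dyy f (τ, z) - ((β' τ * z : ℝ) : ℂ) * f (τ, z) := by
      funext z
      rw [E1 τ z]
      rfl
    rw [hfun]
    have hlin : HasDerivAt (fun z : ℝ => ((β' τ * z : ℝ) : ℂ)) (((β' τ * 1 : ℝ) : ℂ)) z :=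
      ((hasDerivAt_id z).const_mul (β' τ)).ofReal_comp
    exact (((sectR hg1 τ z).const_mul (-Complex.I * (β τ : ℂ))).sub
      (hlin.mul (sectR hf τ z))).deriv
  have hG2 : deriv (deriv (fun z : ℝ =>
      -Complex.I * (β τ : ℂ) * deriv (u τ) z - ((β' τ * z : ℝ) : ℂ) * u τ z)) y
      = (-Complex.I * (β τ : ℂ)) * Dyy (Dyy (Dyy f)) (τ, y)
        - ((((β' τ * 1 : ℝ) : ℂ) * Dyy f (τ, y))
          + (((β' τ * 1 : ℝ) : ℂ) * Dyy f (τ, y) + ((β' τ * y : ℝ) : ℂ) * Dyy (Dyy f) (τ, y))) := by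
    rw [hG1]
    have hlin : HasDerivAt (fun z : ℝ => ((β' τ * z : ℝ) : ℂ)) (((β' τ * 1 : ℝ) : ℂ)) y :=
      ((hasDerivAt_id y).const_mul (β' τ)).ofReal_comp
    exact (((sectR hg2 τ y).const_mul (-Complex.I * (β τ : ℂ))).sub
      (((sectR hf τ y).const_mul (((β' τ * 1 : ℝ) : ℂ))).add
        (hlin.mul (sectR hg1 τ y)))).deriv
  -- assemble
  rw [hL, hG2, hmix, E1 τ y]
  have huy : u τ y = f (τ, y) := rfl
  rw [huy, hu' τ y]
  push_cast
  ring_nf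
  rw [Complex.I_sq, show Complex.I ^ 3 = -Complex.I by rw [pow_succ, Complex.I_sq]; ring]
  ring
end

section
/- Let η be continuous, α solve α'' + ηα = 0, α(0)=0, α'(0)=1, and define Y(τ) = iα(τ)∂_y + α'(τ)y. Then for any smooth solution u of i∂_τ u = (−(1/2)∂_y² + η(τ)y²/2)u, the function Y(τ)u also solves the same equation. -/
open Complex

/-- The evolved position operator Y(τ) = iα(τ)∂_y + α'(τ)y maps
solutions of the quadratic-trap Schrödinger equation
i∂_τ u = (−(1/2)∂_y² + η(τ)y²/2)u to solutions of the same equation. -/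
theorem evolved_position_commutes
    (η α α' : ℝ → ℝ) (hη : Continuous η)
    (hα : ∀ τ, HasDerivAt α (α' τ) τ)
    (hα' : ∀ τ, HasDerivAt α' (-(η τ * α τ)) τ)
    (hα0 : α 0 = 0) (hα'0 : α' 0 = 1)
    (u : ℝ → ℝ → ℂ)
    (husm : ContDiff ℝ (⊤ : ℕ∞) (Function.uncurry u))
    (hu : ∀ τ y : ℝ,
      Complex.I * deriv (fun σ => u σ y) τ
        = -(1/2 : ℂ) * deriv (deriv (u τ)) y + ((η τ * y ^ 2 / 2 : ℝ) : ℂ) * u τ y) :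
    ∀ τ y : ℝ,
      Complex.I * deriv (fun σ =>
          Complex.I * (α σ : ℂ) * deriv (u σ) y + ((α' σ * y : ℝ) : ℂ) * u σ y) τ
        = -(1/2 : ℂ) * deriv (deriv (fun z : ℝ =>
              Complex.I * (α τ : ℂ) * deriv (u τ) z + ((α' τ * z : ℝ) : ℂ) * u τ z)) y
          + ((η τ * y ^ 2 / 2 : ℝ) : ℂ)
            * (Complex.I * (α τ : ℂ) * deriv (u τ) y + ((α' τ * y : ℝ) : ℂ) * u τ y) := by
  intro τ y
  have hU : ContDiff ℝ (⊤ : ℕ∞) (Function.uncurry u) := husm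
  set U : ℝ × ℝ → ℂ := Function.uncurry u with hUdef
  have hUd : Differentiable ℝ U := hU.differentiable (by simp)
  set P1 : ℝ × ℝ → ℂ := fun p => fderiv ℝ U p (1, 0) with hP1def
  set P2 : ℝ × ℝ → ℂ := fun p => fderiv ℝ U p (0, 1) with hP2def
  have hP1 : ContDiff ℝ (⊤ : ℕ∞) P1 := (hU.fderiv_right (by simp)).clm_apply contDiff_const
  have hP2 : ContDiff ℝ (⊤ : ℕ∞) P2 := (hU.fderiv_right (by simp)).clm_apply contDiff_const
  set P22 : ℝ × ℝ → ℂ := fun p => fderiv ℝ P2 p (0, 1) with hP22def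
  have hP22 : ContDiff ℝ (⊤ : ℕ∞) P22 := (hP2.fderiv_right (by simp)).clm_apply contDiff_const
  set P222 : ℝ × ℝ → ℂ := fun p => fderiv ℝ P22 p (0, 1) with hP222def
  -- slice lemmas
  have sliceY : ∀ (f : ℝ × ℝ → ℂ), Differentiable ℝ f → ∀ a b : ℝ,
      HasDerivAt (fun z => f (a, z)) (fderiv ℝ f (a, b) (0, 1)) b := by
    intro f hf a b
    have h := (hf (a, b)).hasFDerivAt.comp_hasDerivAt b
      ((hasDerivAt_const b a).prodMk (hasDerivAt_id b))
    simpa [Function.comp_def] using h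
  have sliceT : ∀ (f : ℝ × ℝ → ℂ), Differentiable ℝ f → ∀ a b : ℝ,
      HasDerivAt (fun σ => f (σ, b)) (fderiv ℝ f (a, b) (1, 0)) a := by
    intro f hf a b
    have h := (hf (a, b)).hasFDerivAt.comp_hasDerivAt a
      ((hasDerivAt_id a).prodMk (hasDerivAt_const a b))
    simpa [Function.comp_def] using h
  have hderiv_y : ∀ a b : ℝ, deriv (u a) b = P2 (a, b) := by
    intro a b
    exact (sliceY U hUd a b).deriv
  have hderiv_t : ∀ a b : ℝ, deriv (fun σ => u σ b) a = P1 (a, b) := by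
    intro a b
    exact (sliceT U hUd a b).deriv
  -- the PDE in terms of partials
  have hE : ∀ a b : ℝ, Complex.I * P1 (a, b)
      = -(1/2 : ℂ) * P22 (a, b) + ((η a * b ^ 2 / 2 : ℝ) : ℂ) * u a b := by
    intro a b
    have h := hu a b
    rw [hderiv_t a b] at h
    have h2 : deriv (u a) = fun z => P2 (a, z) := funext fun z => hderiv_y a z
    rw [h2, (sliceY P2 (hP2.differentiable (by simp)) a b).deriv] at h
    exact h
  -- second derivative symmetry
  have hfd2 : ∀ p : ℝ × ℝ, HasFDerivAt (fderiv ℝ U) (fderiv ℝ (fderiv ℝ U) p) p :=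
    fun p => ((hU.fderiv_right (m := (⊤ : ℕ∞)) (by simp)).differentiable (by simp) p).hasFDerivAt
  have hP2fd : ∀ (p w : ℝ × ℝ), fderiv ℝ P2 p w = (fderiv ℝ (fderiv ℝ U) p w) (0, 1) := by
    intro p w
    have h : HasFDerivAt P2
        ((ContinuousLinearMap.apply ℝ ℂ ((0:ℝ),(1:ℝ))).comp (fderiv ℝ (fderiv ℝ U) p)) p :=
      (ContinuousLinearMap.apply ℝ ℂ ((0:ℝ),(1:ℝ))).hasFDerivAt.comp p (hfd2 p)
    rw [h.fderiv]; rfl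
  have hP1fd : ∀ (p w : ℝ × ℝ), fderiv ℝ P1 p w = (fderiv ℝ (fderiv ℝ U) p w) (1, 0) := by
    intro p w
    have h : HasFDerivAt P1
        ((ContinuousLinearMap.apply ℝ ℂ ((1:ℝ),(0:ℝ))).comp (fderiv ℝ (fderiv ℝ U) p)) p :=
      (ContinuousLinearMap.apply ℝ ℂ ((1:ℝ),(0:ℝ))).hasFDerivAt.comp p (hfd2 p)
    rw [h.fderiv]; rfl
  have hmix : fderiv ℝ P2 (τ, y) (1, 0) = fderiv ℝ P1 (τ, y) (0, 1) := by
    rw [hP2fd, hP1fd]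
    exact second_derivative_symmetric (fun x => (hUd x).hasFDerivAt) (hfd2 (τ, y)) _ _
  -- y-derivative of the PDE
  have hE' : Complex.I * fderiv ℝ P1 (τ, y) (0, 1)
      = -(1/2 : ℂ) * P222 (τ, y) + ((η τ * y : ℝ) : ℂ) * u τ y
        + ((η τ * y ^ 2 / 2 : ℝ) : ℂ) * P2 (τ, y) := by
    have hfun : (fun z => Complex.I * P1 (τ, z))
        = fun z => -(1/2 : ℂ) * P22 (τ, z) + ((η τ * z ^ 2 / 2 : ℝ) : ℂ) * u τ z :=
      funext fun z => hE τ z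
    have hL : HasDerivAt (fun z => Complex.I * P1 (τ, z))
        (Complex.I * fderiv ℝ P1 (τ, y) (0, 1)) y :=
      (sliceY P1 (hP1.differentiable (by simp)) τ y).const_mul Complex.I
    have hpoly : HasDerivAt (fun z : ℝ => ((η τ * z ^ 2 / 2 : ℝ) : ℂ)) ((η τ * y : ℝ) : ℂ) y := by
      have h0 : HasDerivAt (fun z : ℝ => η τ * z ^ 2 / 2) (η τ * y) y := by
        have := ((hasDerivAt_pow 2 y).const_mul (η τ)).div_const 2
        refine this.congr_deriv ?_
        ring
      exact h0.ofReal_comp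
    have hR : HasDerivAt
        (fun z => -(1/2 : ℂ) * P22 (τ, z) + ((η τ * z ^ 2 / 2 : ℝ) : ℂ) * u τ z)
        (-(1/2 : ℂ) * P222 (τ, y)
          + (((η τ * y : ℝ) : ℂ) * u τ y + ((η τ * y ^ 2 / 2 : ℝ) : ℂ) * P2 (τ, y))) y :=
      ((sliceY P22 (hP22.differentiable (by simp)) τ y).const_mul (-(1/2 : ℂ))).add
        (hpoly.mul (sliceY U hUd τ y))
    have h1 := hL.deriv
    rw [hfun, hR.deriv] at h1
    rw [← h1]; ring
  -- mixed partial as τ-derivative of P2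
  have hmixslice : HasDerivAt (fun σ => P2 (σ, y)) (fderiv ℝ P1 (τ, y) (0, 1)) τ := by
    have h := sliceT P2 (hP2.differentiable (by simp)) τ y
    rwa [hmix] at h
  -- rewrite goal in terms of partials
  simp only [hderiv_y]
  -- τ-derivative of Y u
  have hAτ : HasDerivAt (fun σ => (α σ : ℂ)) ((α' τ : ℝ) : ℂ) τ := (hα τ).ofReal_comp
  have hA'τ : HasDerivAt (fun σ => ((α' σ * y : ℝ) : ℂ)) ((-(η τ * α τ) * y : ℝ) : ℂ) τ :=
    ((hα' τ).mul_const y).ofReal_comp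
  have hL1 : HasDerivAt (fun σ => Complex.I * (α σ : ℂ) * P2 (σ, y))
      (Complex.I * ((α' τ : ℝ) : ℂ) * P2 (τ, y)
        + Complex.I * (α τ : ℂ) * fderiv ℝ P1 (τ, y) (0, 1)) τ := by
    have h := (hAτ.const_mul Complex.I).mul hmixslice
    exact h
  have hL2 : HasDerivAt (fun σ => ((α' σ * y : ℝ) : ℂ) * u σ y)
      (((-(η τ * α τ) * y : ℝ) : ℂ) * u τ y + ((α' τ * y : ℝ) : ℂ) * P1 (τ, y)) τ :=
    hA'τ.mul (sliceT U hUd τ y)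
  have hLHS : HasDerivAt
      (fun σ => Complex.I * (α σ : ℂ) * P2 (σ, y) + ((α' σ * y : ℝ) : ℂ) * u σ y)
      ((Complex.I * ((α' τ : ℝ) : ℂ) * P2 (τ, y)
          + Complex.I * (α τ : ℂ) * fderiv ℝ P1 (τ, y) (0, 1))
        + (((-(η τ * α τ) * y : ℝ) : ℂ) * u τ y + ((α' τ * y : ℝ) : ℂ) * P1 (τ, y))) τ :=
    hL1.add hL2
  rw [hLHS.deriv]
  -- y-derivatives of Y u at fixed τ
  have hlin : ∀ z : ℝ, HasDerivAt (fun w : ℝ => ((α' τ * w : ℝ) : ℂ)) ((α' τ : ℝ) : ℂ) z := by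
    intro z
    have h1 : HasDerivAt (fun w : ℝ => α' τ * w) (α' τ) z := by
      simpa using (hasDerivAt_id z).const_mul (α' τ)
    exact h1.ofReal_comp
  have hg1 : ∀ z : ℝ, HasDerivAt
      (fun w => Complex.I * (α τ : ℂ) * P2 (τ, w) + ((α' τ * w : ℝ) : ℂ) * u τ w)
      (Complex.I * (α τ : ℂ) * P22 (τ, z)
        + (((α' τ : ℝ) : ℂ) * u τ z + ((α' τ * z : ℝ) : ℂ) * P2 (τ, z))) z := by
    intro z
    exact ((sliceY P2 (hP2.differentiable (by simp)) τ z).const_mul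
        (Complex.I * (α τ : ℂ))).add ((hlin z).mul (sliceY U hUd τ z))
  have hg1' : deriv (fun w => Complex.I * (α τ : ℂ) * P2 (τ, w) + ((α' τ * w : ℝ) : ℂ) * u τ w)
      = fun z => Complex.I * (α τ : ℂ) * P22 (τ, z)
        + (((α' τ : ℝ) : ℂ) * u τ z + ((α' τ * z : ℝ) : ℂ) * P2 (τ, z)) :=
    funext fun z => (hg1 z).deriv
  have hg2 : HasDerivAt
      (fun z => Complex.I * (α τ : ℂ) * P22 (τ, z)
        + (((α' τ : ℝ) : ℂ) * u τ z + ((α' τ * z : ℝ) : ℂ) * P2 (τ, z)))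
      (Complex.I * (α τ : ℂ) * P222 (τ, y)
        + (((α' τ : ℝ) : ℂ) * P2 (τ, y)
          + (((α' τ : ℝ) : ℂ) * P2 (τ, y) + ((α' τ * y : ℝ) : ℂ) * P22 (τ, y)))) y :=
    ((sliceY P22 (hP22.differentiable (by simp)) τ y).const_mul (Complex.I * (α τ : ℂ))).add
      (((sliceY U hUd τ y).const_mul ((α' τ : ℝ) : ℂ)).add
        ((hlin y).mul (sliceY P2 (hP2.differentiable (by simp)) τ y)))
  rw [hg1', hg2.deriv]
  -- now pure algebra using hE and hE'
  have hEτy := hE τ y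
  push_cast at hEτy hE' ⊢
  linear_combination (α' τ : ℂ) * (y : ℂ) * hEτy + Complex.I * (α τ : ℂ) * hE' + (α' τ : ℂ) * P2 (τ, y) * Complex.I_sq
end
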